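/- Suppose sup over (x̃, θ) ∈ B_{ε,x} × Θ of p(x̃|θ) is finite for some ε > 0, where B_{ε,x} = {x̃ : x̃ has the same zero pattern as x and D(x̃^+, x^+) < ε} for a distance D under which the nonzero likelihood x̃^+ ↦ p(x̃^+|θ) is continuous at x^+. Then for each θ ∈ Θ, the ABC posterior π_ε(θ|x) ∝ π(θ) ∫ 1_{B_{ε,x}}(x̃) p(x̃|θ) dx̃ converges to the true posterior π(θ|x) ∝ π(θ) p(x|θ) as ε → 0. -/

import Mathlib

/-!
Up to the prior, the ABC likelihood is the average over the ball `B(x⁺, ε)` of the continuous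
likelihood `p(·|θ)`, so it tends to `p(x⁺|θ)` for every `θ`. The uniform bound on the likelihood
near `x⁺` dominates the ABC numerators by `C |π|`, so by dominated convergence the normalising
constants converge too, to a nonzero limit.
-/

open MeasureTheory Filter Metric Topology

section SetAverage

variable {α E : Type*} [MeasurableSpace α] {μ : Measure α}
  [NormedAddCommGroup E] [NormedSpace ℝ E]

theorem norm_setAverage_le_of_norm_le_const {s : Set α} {f : α → E} {C : ℝ}
    (hs₀ : μ s ≠ 0) (hs : μ s ≠ ⊤) (hC : ∀ x ∈ s, ‖f x‖ ≤ C) :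
    ‖⨍ x in s, f x ∂μ‖ ≤ C := by
  have hμs : 0 < μ.real s := ENNReal.toReal_pos hs₀ hs
  rw [setAverage_eq, norm_smul, norm_inv, Real.norm_of_nonneg hμs.le, inv_mul_le_iff₀ hμs,
    mul_comm]
  exact norm_setIntegral_le_of_norm_le_const hs.lt_top hC

theorem setAverage_sub_const [CompleteSpace E] {s : Set α} {f : α → E} (hs₀ : μ s ≠ 0)
    (hs : μ s ≠ ⊤) (hf : IntegrableOn f s μ) (c : E) :
    ⨍ x in s, (f x - c) ∂μ = ⨍ x in s, f x ∂μ - c := by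
  have hμs : μ.real s ≠ 0 := (ENNReal.toReal_pos hs₀ hs).ne'
  rw [setAverage_eq, setAverage_eq, integral_sub hf (integrableOn_const hs), setIntegral_const,
    smul_sub, inv_smul_smul₀ hμs]

theorem mul_setIntegral_div_measureReal {s : Set α} (f : α → ℝ) (c : ℝ) :
    c * ((∫ x in s, f x ∂μ) / (μ s).toReal) = ⨍ x in s, c * f x ∂μ := by
  rw [setAverage_eq, integral_const_mul, smul_eq_mul, measureReal_def]
  ring

theorem ContinuousAt.tendsto_setAverage_ball [CompleteSpace E] [PseudoMetricSpace α]
    [OpensMeasurableSpace α] [IsLocallyFiniteMeasure μ] [μ.IsOpenPosMeasure] {f : α → E} {x : α}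
    (hf : ContinuousAt f x) (hfm : StronglyMeasurableAtFilter f (𝓝 x) μ) :
    Tendsto (fun r => ⨍ y in ball x r, f y ∂μ) (𝓝[>] 0) (𝓝 (f x)) := by
  obtain ⟨s, hs, hfs⟩ := hf.tendsto.integrableAtFilter hfm (μ.finiteAt_nhds x)
  obtain ⟨t, ht, hμt⟩ := μ.finiteAt_nhds x
  rw [Metric.tendsto_nhds]
  intro δ hδ
  have hnear : {y | dist (f y) (f x) < δ / 2} ∈ 𝓝 x :=
    hf.preimage_mem_nhds (ball_mem_nhds _ (half_pos hδ))
  obtain ⟨r₀, hr₀, hball⟩ := Metric.mem_nhds_iff.1 (inter_mem (inter_mem hs ht) hnear)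
  filter_upwards [Ioo_mem_nhdsGT hr₀] with r hr
  have hsub : ball x r ⊆ (s ∩ t) ∩ {y | dist (f y) (f x) < δ / 2} :=
    (ball_subset_ball hr.2.le).trans hball
  have hμ₀ : μ (ball x r) ≠ 0 := (measure_ball_pos μ x hr.1).ne'
  have hμ : μ (ball x r) ≠ ⊤ :=
    ((measure_mono fun y hy => (hsub hy).1.2).trans_lt hμt).ne
  have hfr : IntegrableOn f (ball x r) μ := hfs.mono_set fun y hy => (hsub hy).1.1
  rw [dist_eq_norm, ← setAverage_sub_const hμ₀ hμ hfr]
  refine (norm_setAverage_le_of_norm_le_const hμ₀ hμ fun y hy => ?_).trans_lt (half_lt_self hδ)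
  rw [← dist_eq_norm]
  exact (hsub hy).2.le

end SetAverage

theorem tendsto_div_integral_of_dominated {Θ ι : Type*} [MeasurableSpace Θ] {ν : Measure Θ}
    {l : Filter ι} [l.IsCountablyGenerated] {F : ι → Θ → ℝ} {f : Θ → ℝ} (bound : Θ → ℝ)
    (hFm : ∀ᶠ i in l, AEStronglyMeasurable (F i) ν)
    (h_bound : ∀ᶠ i in l, ∀ᵐ θ ∂ν, ‖F i θ‖ ≤ bound θ) (bound_integrable : Integrable bound ν)
    (h_lim : ∀ θ, Tendsto (fun i => F i θ) l (𝓝 (f θ))) (hf : ∫ θ, f θ ∂ν ≠ 0) (θ : Θ) :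
    Tendsto (fun i => F i θ / ∫ θ', F i θ' ∂ν) l (𝓝 (f θ / ∫ θ', f θ' ∂ν)) :=
  (h_lim θ).div (tendsto_integral_filter_of_dominated_convergence bound hFm h_bound
    bound_integrable (ae_of_all _ h_lim)) hf

theorem abc_posterior_convergence_general {Θ : Type*} [MeasurableSpace Θ]
    (ν : Measure Θ) (m t₀ : ℕ) (xplus : Fin m → ℝ)
    (π : Θ → ℝ) (pX0 : Θ → ℝ) (pplus : Θ → (Fin m → ℝ) → ℝ)
    (hπint : Integrable π ν)
    (hpX0 : ∀ θ, pX0 θ ∈ Set.Icc (0 : ℝ) 1)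
    (hmeas : ∀ θ, Measurable (pplus θ))
    (hnonneg : ∀ θ y, 0 ≤ pplus θ y)
    (hcont : ∀ θ, ContinuousAt (pplus θ) xplus)
    (hbound : ∃ ε₀ > (0 : ℝ), ∃ C : ℝ, ∀ θ : Θ, ∀ y ∈ Metric.ball xplus ε₀,
        pX0 θ ^ t₀ * (1 - pX0 θ) ^ m * pplus θ y ≤ C)
    (hIε : ∀ ε > (0 : ℝ), Integrable (fun θ => π θ *
        (pX0 θ ^ t₀ * (1 - pX0 θ) ^ m *
          ((∫ y in Metric.ball xplus ε, pplus θ y) /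
            (volume (Metric.ball xplus ε)).toReal))) ν)
    (hZ : (∫ θ, π θ * (pX0 θ ^ t₀ * (1 - pX0 θ) ^ m * pplus θ xplus) ∂ν) ≠ 0) :
    ∀ θ : Θ, Filter.Tendsto (fun ε : ℝ =>
        π θ * (pX0 θ ^ t₀ * (1 - pX0 θ) ^ m *
          ((∫ y in Metric.ball xplus ε, pplus θ y) /
            (volume (Metric.ball xplus ε)).toReal)) /
        ∫ θ', π θ' * (pX0 θ' ^ t₀ * (1 - pX0 θ') ^ m *
          ((∫ y in Metric.ball xplus ε, pplus θ' y) /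
            (volume (Metric.ball xplus ε)).toReal)) ∂ν)
      (nhdsWithin 0 (Set.Ioi 0))
      (nhds (π θ * (pX0 θ ^ t₀ * (1 - pX0 θ) ^ m * pplus θ xplus) /
        ∫ θ', π θ' * (pX0 θ' ^ t₀ * (1 - pX0 θ') ^ m * pplus θ' xplus) ∂ν)) := by
  obtain ⟨ε₀, hε₀, C, hC⟩ := hbound
  have hL_nonneg (θ y) : 0 ≤ pX0 θ ^ t₀ * (1 - pX0 θ) ^ m * pplus θ y :=
    mul_nonneg (mul_nonneg (pow_nonneg (hpX0 θ).1 _) (pow_nonneg (sub_nonneg.2 (hpX0 θ).2) _))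
      (hnonneg θ y)
  simp only [mul_setIntegral_div_measureReal] at hIε ⊢
  refine tendsto_div_integral_of_dominated (fun θ => ‖π θ‖ * C) ?_ ?_ (hπint.norm.mul_const C)
    (fun θ => ?_) hZ
  · filter_upwards [self_mem_nhdsWithin] with ε hε using (hIε ε hε).aestronglyMeasurable
  · filter_upwards [Ioo_mem_nhdsGT hε₀] with ε hε
    refine ae_of_all _ fun θ => ?_
    rw [norm_mul]
    refine mul_le_mul_of_nonneg_left (norm_setAverage_le_of_norm_le_const
      (measure_ball_pos _ _ hε.1).ne' measure_ball_lt_top.ne fun y hy => ?_) (norm_nonneg _)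
    rw [Real.norm_of_nonneg (hL_nonneg θ y)]
    exact hC θ y (ball_subset_ball hε.2.le hy)
  · exact ((hcont θ).const_mul _ |>.tendsto_setAverage_ball
      ((hmeas θ).const_mul _).stronglyMeasurable.stronglyMeasurableAtFilter).const_mul (π θ)

/-- Convergence of the ABC posterior to the true posterior for mixed data.
The data consists of `t₀` zeros and a nonzero part `x⁺ ∈ ℝ^m` (`m = t - t₀`), with
likelihood `p(x|θ) = p_X(0|θ)^{t₀}(1-p_X(0|θ))^m p(x⁺|θ)`. Synthetic data is
accepted when it has the same zero pattern and its nonzero part lies within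
distance `ε` of `x⁺`, so the approximate likelihood is
`p_ε(x|θ) = p_X(0|θ)^{t₀}(1-p_X(0|θ))^m · (∫_{B(x⁺,ε)} p(x̃⁺|θ)dx̃ / vol B(x⁺,ε))`.
If `sup_{(x̃,θ) ∈ B_{ε₀,x} × Θ} p(x̃|θ) < ∞` for some `ε₀ > 0` and the continuous
part of the likelihood is continuous at `x⁺`, then for each `θ` the ABC posterior
`π_ε(θ|x) = π(θ)p_ε(x|θ) / ∫ π p_ε` converges to the true posterior
`π(θ|x) = π(θ)p(x|θ) / ∫ π p` as `ε → 0⁺`. -/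
theorem abc_posterior_convergence {Θ : Type*} [MeasurableSpace Θ]
    (ν : Measure Θ) (m t₀ : ℕ) (xplus : Fin m → ℝ)
    (π : Θ → ℝ) (pX0 : Θ → ℝ) (pplus : Θ → (Fin m → ℝ) → ℝ)
    (hπ0 : ∀ θ, 0 ≤ π θ) (hπint : Integrable π ν)
    (hpX0 : ∀ θ, pX0 θ ∈ Set.Icc (0 : ℝ) 1)
    (hmeas : ∀ θ, Measurable (pplus θ))
    (hnonneg : ∀ θ y, 0 ≤ pplus θ y)
    (hcont : ∀ θ, ContinuousAt (pplus θ) xplus)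
    (hbound : ∃ ε₀ > (0 : ℝ), ∃ C : ℝ, ∀ θ : Θ, ∀ y ∈ Metric.ball xplus ε₀,
        pX0 θ ^ t₀ * (1 - pX0 θ) ^ m * pplus θ y ≤ C)
    (hIε : ∀ ε > (0 : ℝ), Integrable (fun θ => π θ *
        (pX0 θ ^ t₀ * (1 - pX0 θ) ^ m *
          ((∫ y in Metric.ball xplus ε, pplus θ y) /
            (volume (Metric.ball xplus ε)).toReal))) ν)
    (hI : Integrable
        (fun θ => π θ * (pX0 θ ^ t₀ * (1 - pX0 θ) ^ m * pplus θ xplus)) ν)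
    (hZε : ∀ ε > (0 : ℝ), (∫ θ, π θ *
        (pX0 θ ^ t₀ * (1 - pX0 θ) ^ m *
          ((∫ y in Metric.ball xplus ε, pplus θ y) /
            (volume (Metric.ball xplus ε)).toReal)) ∂ν) ≠ 0)
    (hZ : (∫ θ, π θ * (pX0 θ ^ t₀ * (1 - pX0 θ) ^ m * pplus θ xplus) ∂ν) ≠ 0) :
    ∀ θ : Θ, Filter.Tendsto (fun ε : ℝ =>
        π θ * (pX0 θ ^ t₀ * (1 - pX0 θ) ^ m *
          ((∫ y in Metric.ball xplus ε, pplus θ y) /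
            (volume (Metric.ball xplus ε)).toReal)) /
        ∫ θ', π θ' * (pX0 θ' ^ t₀ * (1 - pX0 θ') ^ m *
          ((∫ y in Metric.ball xplus ε, pplus θ' y) /
            (volume (Metric.ball xplus ε)).toReal)) ∂ν)
      (nhdsWithin 0 (Set.Ioi 0))
      (nhds (π θ * (pX0 θ ^ t₀ * (1 - pX0 θ) ^ m * pplus θ xplus) /
        ∫ θ', π θ' * (pX0 θ' ^ t₀ * (1 - pX0 θ') ^ m * pplus θ' xplus) ∂ν)) :=
  abc_posterior_convergence_general ν m t₀ xplus π pX0 pplus hπint hpX0 hmeas hnonneg hcont hbound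
    hIε hZ
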